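/- Helstrom bound in Bloch form (Eq. (19)): Let q : Fin 2 → ℝ be priors with q 0 ≥ q 1, and let v : Fin 2 → EuclideanSpace ℝ (Fin 3) with ‖v i‖ ≤ 1. If ‖q 0 • v 0 − q 1 • v 1‖ ≥ q 0 − q 1, then (1/2) * (q 0 + q 1 + ‖q 0 • v 0 − q 1 • v 1‖) is the greatest element of the set of success probabilities {P(M) : M a 2-outcome POVM}. -/

import Mathlib

open Matrix Complex Finset RealInnerProductSpace
open scoped ComplexOrder

/-- The first Pauli matrix. -/
noncomputable def pauli1 : Matrix (Fin 2) (Fin 2) ℂ := !![0, 1; 1, 0]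

/-- The second Pauli matrix. -/
noncomputable def pauli2 : Matrix (Fin 2) (Fin 2) ℂ := !![0, -Complex.I; Complex.I, 0]

/-- The third Pauli matrix. -/
noncomputable def pauli3 : Matrix (Fin 2) (Fin 2) ℂ := !![1, 0; 0, -1]

/-- The operator `v ⬝ σ` for a Bloch vector `v`. -/
noncomputable def blochOp (v : EuclideanSpace ℝ (Fin 3)) : Matrix (Fin 2) (Fin 2) ℂ :=
  (v 0 : ℂ) • pauli1 + (v 1 : ℂ) • pauli2 + (v 2 : ℂ) • pauli3

/-- The qubit state with Bloch vector `v`. -/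
noncomputable def qubitState (v : EuclideanSpace ℝ (Fin 3)) : Matrix (Fin 2) (Fin 2) ℂ :=
  (1 / 2 : ℂ) • (1 + blochOp v)

/-- An `N`-outcome POVM on `ℂ^d`. -/
def IsPOVM {N d : ℕ} (M : Fin N → Matrix (Fin d) (Fin d) ℂ) : Prop :=
  (∀ i, (M i).PosSemidef) ∧ ∑ i, M i = 1

/-- Priors: a probability distribution. -/
def IsPriors {N : ℕ} (q : Fin N → ℝ) : Prop :=
  (∀ i, 0 ≤ q i) ∧ ∑ i, q i = 1

/-- Success probability of the POVM `M` for qubit states with Bloch vectors `v`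
and priors `q`. -/
noncomputable def succProb {N : ℕ} (q : Fin N → ℝ) (v : Fin N → EuclideanSpace ℝ (Fin 3))
    (M : Fin N → Matrix (Fin 2) (Fin 2) ℂ) : ℝ :=
  ∑ i, q i * (Matrix.trace (qubitState (v i) * M i)).re

/-- The geometric KKT conditions for `(q, v)` satisfied by `(r, w)`. -/
def GeomKKT {N : ℕ} (q : Fin N → ℝ) (v : Fin N → EuclideanSpace ℝ (Fin 3))
    (r : Fin N → ℝ) (w : Fin N → EuclideanSpace ℝ (Fin 3)) : Prop :=
  (∀ i j, r i • w i - r j • w j = q j • v j - q i • v i) ∧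
  (∃ p : Fin N → ℝ, (∀ i, 0 < p i) ∧ (∑ i, p i = 1) ∧ (∑ i, p i • w i = 0)) ∧
  (∀ i, ‖w i‖ = 1) ∧
  (∀ i j, r i - r j = q j - q i)

/-! For a two-outcome POVM `(M, 1 - M)` the success probability is `q 1 + Re tr (Λ M)` with
`Λ = q 0 • ρ(v 0) - q 1 • ρ(v 1)`. Writing `q 0 • v 0 - q 1 • v 1 = δ • u` with `‖u‖ = 1` and
`δ = ‖q 0 • v 0 - q 1 • v 1‖`, the operator `Λ` is `λ₊ • P + λ₋ • (1 - P)` for the rank-one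
projection `P = ρ(u)` and `λ± = (q 0 - q 1 ± δ) / 2`. The hypotheses give
`λ₋ ≤ 0 ≤ λ₊`, so `Re tr (Λ M) ≤ λ₊ tr P = λ₊` whenever `0 ≤ M ≤ 1`, with equality at `M = P`. -/

theorem exists_norm_eq_one_and_eq_norm_smul {E : Type*} [NormedAddCommGroup E] [NormedSpace ℝ E]
    [Nontrivial E] (x : E) : ∃ u : E, ‖u‖ = 1 ∧ x = ‖x‖ • u := by
  rcases eq_or_ne x 0 with rfl | hx
  · obtain ⟨u, hu⟩ := exists_norm_eq E zero_le_one
    exact ⟨u, hu, by simp⟩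
  · refine ⟨‖x‖⁻¹ • x, norm_smul_inv_norm hx, ?_⟩
    rw [smul_smul, mul_inv_cancel₀ (norm_ne_zero_iff.mpr hx), one_smul]

namespace IsStarProjection

variable {n : Type*} [Fintype n] {P M : Matrix n n ℂ}

theorem conjTranspose_mul_self (hP : IsStarProjection P) : Pᴴ * P = P := by
  rw [← Matrix.star_eq_conjTranspose, hP.isSelfAdjoint.star_eq, hP.isIdempotentElem.eq]

theorem posSemidef (hP : IsStarProjection P) : P.PosSemidef :=
  hP.conjTranspose_mul_self ▸ Matrix.posSemidef_conjTranspose_mul_self P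

theorem re_trace_mul_nonneg (hP : IsStarProjection P) (hM : M.PosSemidef) :
    0 ≤ (P * M).trace.re := by
  have h : (P * M).trace = (P * M * Pᴴ).trace := by
    rw [Matrix.trace_mul_cycle, hP.conjTranspose_mul_self]
  exact h ▸ (Complex.nonneg_iff.mp (hM.mul_mul_conjTranspose_same P).trace_nonneg).1

theorem isPOVM {d : ℕ} {P : Matrix (Fin d) (Fin d) ℂ} (hP : IsStarProjection P) :
    IsPOVM ![P, 1 - P] :=
  ⟨Fin.forall_fin_two.mpr ⟨hP.posSemidef, hP.one_sub.posSemidef⟩, by simp⟩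

variable [DecidableEq n]

theorem re_trace_smul_add_smul_one_sub_mul_le (hP : IsStarProjection P)
    (hM : M.PosSemidef) (hM' : (1 - M).PosSemidef) {a b : ℝ} (ha : 0 ≤ a) (hb : b ≤ 0) :
    (((a : ℂ) • P + (b : ℂ) • (1 - P)) * M).trace.re ≤ a * P.trace.re := by
  have hPM : (P * M).trace.re ≤ P.trace.re := by
    have h := hP.re_trace_mul_nonneg hM'
    rw [Matrix.mul_sub, Matrix.mul_one, Matrix.trace_sub, Complex.sub_re] at h
    linarith
  have hPM' := hP.one_sub.re_trace_mul_nonneg hM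
  rw [Matrix.add_mul, Matrix.smul_mul, Matrix.smul_mul, Matrix.trace_add, Matrix.trace_smul,
    Matrix.trace_smul]
  simp only [Complex.add_re, smul_eq_mul, Complex.re_ofReal_mul]
  nlinarith

theorem trace_smul_add_smul_one_sub_mul_self (hP : IsStarProjection P)
    (a b : ℂ) : ((a • P + b • (1 - P)) * P).trace = a * P.trace := by
  rw [Matrix.add_mul, Matrix.smul_mul, Matrix.smul_mul, hP.isIdempotentElem.eq,
    hP.one_sub_mul_self]
  simp

end IsStarProjection

theorem IsPOVM.fin_two_apply_one {d : ℕ} {M : Fin 2 → Matrix (Fin d) (Fin d) ℂ}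
    (hM : IsPOVM M) : M 1 = 1 - M 0 :=
  eq_sub_of_add_eq' (by simpa [Fin.sum_univ_two] using hM.2)

section Bloch

variable (u v : EuclideanSpace ℝ (Fin 3))

theorem blochOp_eq :
    blochOp v = !![(v 2 : ℂ), v 0 - I * v 1; v 0 + I * v 1, -(v 2 : ℂ)] := by
  ext i j
  fin_cases i <;> fin_cases j <;> simp [blochOp, pauli1, pauli2, pauli3] <;> ring

theorem blochOp_smul (c : ℝ) : blochOp (c • v) = (c : ℂ) • blochOp v := by
  simp only [blochOp, PiLp.smul_apply, smul_eq_mul, ofReal_mul, mul_smul, smul_add]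

theorem blochOp_sub : blochOp (u - v) = blochOp u - blochOp v := by
  simp only [blochOp, PiLp.sub_apply, ofReal_sub, sub_smul]
  abel

theorem trace_blochOp : (blochOp v).trace = 0 := by
  simp [blochOp_eq, Matrix.trace_fin_two]

theorem blochOp_conjTranspose : (blochOp v)ᴴ = blochOp v := by
  rw [blochOp_eq]
  ext i j
  fin_cases i <;> fin_cases j <;> simp [Complex.ext_iff]

theorem blochOp_mul_self : blochOp v * blochOp v = ((‖v‖ ^ 2 : ℝ) : ℂ) • 1 := by
  have hv : ((‖v‖ ^ 2 : ℝ) : ℂ) = (v 0 : ℂ) ^ 2 + (v 1 : ℂ) ^ 2 + (v 2 : ℂ) ^ 2 := by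
    simp [EuclideanSpace.real_norm_sq_eq, Fin.sum_univ_three]
  rw [hv, blochOp_eq]
  ext i j
  fin_cases i <;> fin_cases j <;> simp [Matrix.mul_apply, Fin.sum_univ_two]
  all_goals first | ring1 | linear_combination (-(v 1 : ℂ) ^ 2) * I_sq

theorem trace_qubitState : (qubitState v).trace = 1 := by
  simp [qubitState, trace_blochOp]

theorem isStarProjection_qubitState (hu : ‖u‖ = 1) : IsStarProjection (qubitState u) where
  isSelfAdjoint := by
    simp [IsSelfAdjoint, qubitState, Matrix.star_eq_conjTranspose, blochOp_conjTranspose]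
  isIdempotentElem := by
    simp only [IsIdempotentElem, qubitState, smul_mul_smul, add_mul, mul_add, one_mul, mul_one,
      blochOp_mul_self, hu, one_pow, ofReal_one, one_smul]
    module

end Bloch

theorem smul_qubitState_sub_smul_qubitState {a b δ : ℝ} {x y u : EuclideanSpace ℝ (Fin 3)}
    (h : a • x - b • y = δ • u) :
    (a : ℂ) • qubitState x - (b : ℂ) • qubitState y =
      (((a - b + δ) / 2 : ℝ) : ℂ) • qubitState u +
        (((a - b - δ) / 2 : ℝ) : ℂ) • (1 - qubitState u) := by
  have hB : (a : ℂ) • blochOp x - (b : ℂ) • blochOp y = (δ : ℂ) • blochOp u := by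
    rw [← blochOp_smul, ← blochOp_smul, ← blochOp_smul, ← blochOp_sub, h]
  simp only [qubitState]
  push_cast
  linear_combination (norm := module) (1 / 2 : ℂ) • hB

theorem succProb_fin_two (q : Fin 2 → ℝ) (v : Fin 2 → EuclideanSpace ℝ (Fin 3))
    {M : Fin 2 → Matrix (Fin 2) (Fin 2) ℂ} (hM : M 1 = 1 - M 0) :
    succProb q v M =
      q 1 + (((q 0 : ℂ) • qubitState (v 0) - (q 1 : ℂ) • qubitState (v 1)) * M 0).trace.re := by
  simp only [succProb, Fin.sum_univ_two, hM, Matrix.mul_sub, Matrix.mul_one, Matrix.sub_mul,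
    Matrix.smul_mul, Matrix.trace_sub, Matrix.trace_smul, trace_qubitState, sub_re, smul_eq_mul,
    re_ofReal_mul, one_re]
  ring

theorem helstrom_bound_general
    (q : Fin 2 → ℝ) (hq01 : q 1 ≤ q 0)
    (v : Fin 2 → EuclideanSpace ℝ (Fin 3))
    (hcond : q 0 - q 1 ≤ ‖q 0 • v 0 - q 1 • v 1‖) :
    IsGreatest {x | ∃ M : Fin 2 → Matrix (Fin 2) (Fin 2) ℂ, IsPOVM M ∧ succProb q v M = x}
      ((1 / 2) * (q 0 + q 1 + ‖q 0 • v 0 - q 1 • v 1‖)) := by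
  set δ := ‖q 0 • v 0 - q 1 • v 1‖
  obtain ⟨u, hu, hdu⟩ := exists_norm_eq_one_and_eq_norm_smul (q 0 • v 0 - q 1 • v 1)
  have hP := isStarProjection_qubitState u hu
  have hΛ := smul_qubitState_sub_smul_qubitState hdu
  refine ⟨⟨![qubitState u, 1 - qubitState u], hP.isPOVM, ?_⟩, ?_⟩
  · rw [succProb_fin_two q v rfl, hΛ]
    simp only [Matrix.cons_val_zero, hP.trace_smul_add_smul_one_sub_mul_self, trace_qubitState,
      mul_one, ofReal_re]
    ring
  · rintro _ ⟨M, hM, rfl⟩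
    have hM1 := hM.fin_two_apply_one
    have hbound := hP.re_trace_smul_add_smul_one_sub_mul_le (hM.1 0) (hM1 ▸ hM.1 1)
      (a := (q 0 - q 1 + δ) / 2) (b := (q 0 - q 1 - δ) / 2)
      (by linarith [norm_nonneg (q 0 • v 0 - q 1 • v 1)]) (by linarith)
    rw [trace_qubitState, one_re, mul_one] at hbound
    rw [succProb_fin_two q v hM1, hΛ]
    linarith

/-- Helstrom bound in Bloch form (Eq. (19)). -/
theorem helstrom_bound
    (q : Fin 2 → ℝ) (hq : IsPriors q) (hq01 : q 1 ≤ q 0)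
    (v : Fin 2 → EuclideanSpace ℝ (Fin 3)) (hv : ∀ i, ‖v i‖ ≤ 1)
    (hcond : q 0 - q 1 ≤ ‖q 0 • v 0 - q 1 • v 1‖) :
    IsGreatest {x | ∃ M : Fin 2 → Matrix (Fin 2) (Fin 2) ℂ, IsPOVM M ∧ succProb q v M = x}
      ((1 / 2) * (q 0 + q 1 + ‖q 0 • v 0 - q 1 • v 1‖)) :=
  helstrom_bound_general q hq01 v hcond
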